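/- arXiv:1512.03878 — 2 statements merged into one kernel-verified Lean document; each statement's English description precedes it below -/
import Mathlib

section
/- Let p be a joint pmf on a finite set S × T with marginals p_S and p_T, let a ∈ ℝ and γ > 0, and let T_n := { (s,t) : (1/n) log( p(s,t)/(p_S(s) p_T(t)) ) ≤ a + γ }. Suppose K ≥ 2^{n(a+2γ)}. For i.i.d. samples t[1],...,t[K] ~ p_T and an independent S ~ p_S, let I(k) be the indicator that an independent uniform [0,1] variable Z(k) satisfies Z(k) ≤ p(S, t[k]) / (2^{n(a+γ)} p_S(S) p_T(t[k])) (capped at 1) and (t[k], S) ∈ T_n. Then Pr{∀ k : I(k) = 0} ≤ Pr{(S,T) ∉ T_n} + exp(-2^{nγ}), where (S,T) ~ p. -/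
open Finset

/-- Information-spectrum covering lemma: with `K ≥ 2^{n(a+2γ)}` i.i.d. codewords
`t[k] ~ p_T` and acceptance by rejection sampling against the information-density
threshold (restricted to the typical set `T_n`), the probability that no index is
accepted is at most `Pr{(S,T) ∉ T_n} + exp(-2^{nγ})`. -/
theorem covering_failure_bound {S T : Type*} [Fintype S] [Fintype T]
    (p : S → T → ℝ) (hp0 : ∀ s t, 0 ≤ p s t) (hp1 : ∑ s, ∑ t, p s t = 1)
    (pS : S → ℝ) (hpS : ∀ s, pS s = ∑ t, p s t)
    (pT : T → ℝ) (hpT : ∀ t, pT t = ∑ s, p s t)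
    (n K : ℕ) (hn : 0 < n) (a γ : ℝ) (hγ : 0 < γ)
    (hK : (2:ℝ) ^ ((n:ℝ) * (a + 2 * γ)) ≤ (K : ℝ)) :
    ∑ s, pS s *
        (1 - ∑ t ∈ univ.filter (fun t =>
            (1 / (n:ℝ)) * Real.logb 2 (p s t / (pS s * pT t)) ≤ a + γ),
          pT t * min 1 (p s t / ((2:ℝ) ^ ((n:ℝ) * (a + γ)) * pS s * pT t))) ^ K
      ≤ (∑ x ∈ (univ ×ˢ univ).filter (fun x : S × T =>
            ¬ ((1 / (n:ℝ)) * Real.logb 2 (p x.1 x.2 / (pS x.1 * pT x.2)) ≤ a + γ)),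
          p x.1 x.2)
        + Real.exp (-((2:ℝ) ^ ((n:ℝ) * γ))) := by
  classical
  have hpS0 : ∀ s, 0 ≤ pS s := fun s => by
    rw [hpS]; exact Finset.sum_nonneg fun t _ => hp0 s t
  have hpT0 : ∀ t, 0 ≤ pT t := fun t => by
    rw [hpT]; exact Finset.sum_nonneg fun s _ => hp0 s t
  have hSsum : ∑ s, pS s = 1 := by simp_rw [hpS]; exact hp1
  have hTsum : ∑ t, pT t = 1 := by
    simp_rw [hpT]; rw [Finset.sum_comm]; exact hp1
  have hpleT : ∀ s t, p s t ≤ pT t := fun s t => by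
    rw [hpT]; exact Finset.single_le_sum (fun s' _ => hp0 s' t) (mem_univ s)
  set C : ℝ := (2:ℝ) ^ ((n:ℝ) * (a + γ)) with hCdef
  have hCpos : 0 < C := Real.rpow_pos_of_pos two_pos _
  have hK1 : 1 ≤ K := by
    rcases Nat.eq_zero_or_pos K with h | h
    · exfalso
      rw [h] at hK
      norm_num at hK
      exact absurd hK (not_le.2 (Real.rpow_pos_of_pos two_pos _))
    · exact h
  set C' : ℝ := max C 1 with hC'def
  have hC'1 : 1 ≤ C' := le_max_right _ _
  have hCC' : C ≤ C' := le_max_left _ _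
  have hC'pos : 0 < C' := lt_of_lt_of_le one_pos hC'1
  set E : ℝ := Real.exp (-((2:ℝ) ^ ((n:ℝ) * γ))) with hEdef
  have hE0 : 0 ≤ E := (Real.exp_pos _).le
  have hα1 : 1 / C' ≤ 1 := (div_le_one hC'pos).2 hC'1
  have hα0 : 0 ≤ 1 / C' := by positivity
  -- key: (1 - 1/C')^K ≤ E
  have hkey : (1 - 1 / C') ^ K ≤ E := by
    rcases le_or_gt 1 C with hC1 | hC1
    · have hC'C : C' = C := max_eq_left hC1
      have h2 : (0:ℝ) ≤ 1 - 1 / C' := by linarith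
      have h1 : 1 - 1 / C' ≤ Real.exp (-(1 / C')) := by
        linarith [Real.add_one_le_exp (-(1 / C'))]
      calc (1 - 1 / C') ^ K ≤ (Real.exp (-(1 / C'))) ^ K := pow_le_pow_left₀ h2 h1 K
        _ = Real.exp ((K:ℝ) * (-(1 / C'))) := by rw [← Real.exp_nat_mul]
        _ ≤ E := by
          rw [hEdef]
          apply Real.exp_le_exp.2
          rw [hC'C]
          have h3 : C * (2:ℝ) ^ ((n:ℝ) * γ) ≤ K := by
            rw [hCdef, ← Real.rpow_add two_pos]
            calc (2:ℝ) ^ ((n:ℝ) * (a + γ) + (n:ℝ) * γ)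
                = (2:ℝ) ^ ((n:ℝ) * (a + 2 * γ)) := by ring_nf
              _ ≤ K := hK
          have h4 : (2:ℝ) ^ ((n:ℝ) * γ) ≤ (K:ℝ) / C :=
            (le_div_iff₀ hCpos).2 (by linarith)
          calc (K:ℝ) * (-(1 / C)) = -((K:ℝ) / C) := by ring
            _ ≤ -((2:ℝ) ^ ((n:ℝ) * γ)) := neg_le_neg h4
    · have hC'eq : C' = 1 := max_eq_right hC1.le
      rw [hC'eq]
      norm_num
      rw [zero_pow (by omega : K ≠ 0)]
      exact hE0
  have perS : ∀ s, pS s *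
        (1 - ∑ t ∈ univ.filter (fun t =>
            (1 / (n:ℝ)) * Real.logb 2 (p s t / (pS s * pT t)) ≤ a + γ),
          pT t * min 1 (p s t / (C * pS s * pT t))) ^ K
      ≤ (pS s - ∑ t ∈ univ.filter (fun t =>
            (1 / (n:ℝ)) * Real.logb 2 (p s t / (pS s * pT t)) ≤ a + γ), p s t)
        + pS s * E := by
    intro s
    set F := univ.filter (fun t =>
      (1 / (n:ℝ)) * Real.logb 2 (p s t / (pS s * pT t)) ≤ a + γ) with hF
    set q := ∑ t ∈ F, pT t * min 1 (p s t / (C * pS s * pT t)) with hq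
    set P := ∑ t ∈ F, p s t with hP
    have hP0 : 0 ≤ P := Finset.sum_nonneg fun t _ => hp0 s t
    have hPle : P ≤ pS s := by
      rw [hpS]
      exact Finset.sum_le_sum_of_subset_of_nonneg (subset_univ F)
        (fun t _ _ => hp0 s t)
    rcases eq_or_lt_of_le (hpS0 s) with hs0 | hs0
    · have hP00 : P = 0 := le_antisymm (hs0 ▸ hPle) hP0
      rw [← hs0, hP00]
      simp
    · have hq0 : 0 ≤ q := Finset.sum_nonneg fun t _ =>
        mul_nonneg (hpT0 t) (le_min zero_le_one (div_nonneg (hp0 s t)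
          (mul_nonneg (mul_nonneg hCpos.le (hpS0 s)) (hpT0 t))))
      have hq1 : q ≤ 1 := by
        calc q ≤ ∑ t ∈ F, pT t := Finset.sum_le_sum fun t _ =>
              mul_le_of_le_one_right (hpT0 t) (min_le_left _ _)
          _ ≤ ∑ t, pT t := Finset.sum_le_sum_of_subset_of_nonneg (subset_univ F)
              (fun t _ _ => hpT0 t)
          _ = 1 := hTsum
      have hqlb : P / (C' * pS s) ≤ q := by
        rw [hP, Finset.sum_div]
        apply Finset.sum_le_sum
        intro t ht
        rcases eq_or_lt_of_le (hp0 s t) with h0 | h0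
        · rw [← h0]
          simp
        · have hpTt : 0 < pT t := lt_of_lt_of_le h0 (hpleT s t)
          have hrle : p s t ≤ C * (pS s * pT t) := by
            have hmem := (Finset.mem_filter.1 ht).2
            have hn' : (0:ℝ) < n := by exact_mod_cast hn
            have hrpos : 0 < p s t / (pS s * pT t) := div_pos h0 (by positivity)
            have hlog : Real.logb 2 (p s t / (pS s * pT t)) ≤ (n:ℝ) * (a + γ) := by
              have := mul_le_mul_of_nonneg_left hmem hn'.le
              calc Real.logb 2 (p s t / (pS s * pT t))
                  = (n:ℝ) * ((1 / (n:ℝ)) * Real.logb 2 (p s t / (pS s * pT t))) := by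
                    field_simp
                _ ≤ (n:ℝ) * (a + γ) := this
            have h5 := (Real.logb_le_iff_le_rpow one_lt_two hrpos).1 hlog
            rw [div_le_iff₀ (by positivity)] at h5
            calc p s t ≤ (2:ℝ) ^ ((n:ℝ) * (a + γ)) * (pS s * pT t) := h5
              _ = C * (pS s * pT t) := by rw [hCdef]
          have h1 : p s t / (C' * pS s * pT t) ≤ 1 := by
            rw [div_le_one (by positivity)]
            calc p s t ≤ C * (pS s * pT t) := hrle
              _ ≤ C' * (pS s * pT t) := by nlinarith
              _ = C' * pS s * pT t := by ring
          have h2 : p s t / (C' * pS s * pT t) ≤ p s t / (C * pS s * pT t) := by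
            gcongr
          have heq0 : p s t / (C' * pS s) = pT t * (p s t / (C' * pS s * pT t)) := by
            field_simp [hs0.ne', hpTt.ne', hC'pos.ne']
          calc p s t / (C' * pS s) = pT t * (p s t / (C' * pS s * pT t)) := heq0
            _ ≤ pT t * min 1 (p s t / (C * pS s * pT t)) := by
              apply mul_le_mul_of_nonneg_left _ (hpT0 t)
              exact le_min h1 h2
      have hb0 : 0 ≤ P / pS s := div_nonneg hP0 hs0.le
      have hb1 : P / pS s ≤ 1 := (div_le_one hs0).2 hPle
      have hβα : P / (C' * pS s) = (P / pS s) * (1 / C') := by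
        rw [div_mul_div_comm, mul_one, mul_comm (pS s) C']
      have step1 : (1 - q) ^ K ≤ (1 - (P / pS s) * (1 / C')) ^ K := by
        apply pow_le_pow_left₀ (by linarith)
        rw [← hβα]
        linarith [hqlb]
      have step2 : (1 - (P / pS s) * (1 / C')) ^ K
          ≤ (1 - P / pS s) + (1 - 1 / C') ^ K := by
        have hx : (1:ℝ) ∈ Set.Ici (0:ℝ) := Set.mem_Ici.2 zero_le_one
        have hy : (1 - 1 / C') ∈ Set.Ici (0:ℝ) := Set.mem_Ici.2 (by linarith)
        have hconv := (convexOn_pow K).2 hx hy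
          (by linarith : (0:ℝ) ≤ 1 - P / pS s) hb0 (by ring)
        simp only [smul_eq_mul] at hconv
        have heq : 1 - (P / pS s) * (1 / C')
            = (1 - P / pS s) * 1 + (P / pS s) * (1 - 1 / C') := by ring
        rw [heq]
        calc ((1 - P / pS s) * 1 + (P / pS s) * (1 - 1 / C')) ^ K
            ≤ (1 - P / pS s) * 1 ^ K + (P / pS s) * (1 - 1 / C') ^ K := hconv
          _ ≤ (1 - P / pS s) + (1 - 1 / C') ^ K := by
            rw [one_pow, mul_one]
            have h6 : (P / pS s) * (1 - 1 / C') ^ K ≤ 1 * (1 - 1 / C') ^ K :=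
              mul_le_mul_of_nonneg_right hb1 (pow_nonneg (by linarith) K)
            linarith
      have hmain : (1 - q) ^ K ≤ (1 - P / pS s) + E := by
        calc (1 - q) ^ K ≤ (1 - (P / pS s) * (1 / C')) ^ K := step1
          _ ≤ (1 - P / pS s) + (1 - 1 / C') ^ K := step2
          _ ≤ (1 - P / pS s) + E := by linarith [hkey]
      calc pS s * (1 - q) ^ K
          ≤ pS s * ((1 - P / pS s) + E) := mul_le_mul_of_nonneg_left hmain hs0.le
        _ = (pS s - P) + pS s * E := by
          field_simp [hs0.ne']
  have hatyp : ∑ s, (pS s - ∑ t ∈ univ.filter (fun t =>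
        (1 / (n:ℝ)) * Real.logb 2 (p s t / (pS s * pT t)) ≤ a + γ), p s t)
      = ∑ x ∈ (univ ×ˢ univ).filter (fun x : S × T =>
            ¬ ((1 / (n:ℝ)) * Real.logb 2 (p x.1 x.2 / (pS x.1 * pT x.2)) ≤ a + γ)),
          p x.1 x.2 := by
    rw [Finset.sum_filter, Finset.sum_product]
    apply Finset.sum_congr rfl
    intro s _
    simp only
    rw [← Finset.sum_filter]
    have hsplit := Finset.sum_filter_add_sum_filter_not univ (fun t =>
      (1 / (n:ℝ)) * Real.logb 2 (p s t / (pS s * pT t)) ≤ a + γ) (p s)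
    linarith [hpS s]
  calc ∑ s, pS s *
        (1 - ∑ t ∈ univ.filter (fun t =>
            (1 / (n:ℝ)) * Real.logb 2 (p s t / (pS s * pT t)) ≤ a + γ),
          pT t * min 1 (p s t / (C * pS s * pT t))) ^ K
      ≤ ∑ s, ((pS s - ∑ t ∈ univ.filter (fun t =>
            (1 / (n:ℝ)) * Real.logb 2 (p s t / (pS s * pT t)) ≤ a + γ), p s t)
          + pS s * E) := Finset.sum_le_sum fun s _ => perS s
    _ = (∑ s, (pS s - ∑ t ∈ univ.filter (fun t =>
            (1 / (n:ℝ)) * Real.logb 2 (p s t / (pS s * pT t)) ≤ a + γ), p s t))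
        + (∑ s, pS s) * E := by rw [Finset.sum_add_distrib, Finset.sum_mul]
    _ = (∑ x ∈ (univ ×ˢ univ).filter (fun x : S × T =>
            ¬ ((1 / (n:ℝ)) * Real.logb 2 (p x.1 x.2 / (pS x.1 * pT x.2)) ≤ a + γ)),
          p x.1 x.2) + E := by rw [hatyp, hSsum, one_mul]
end

section
/- (Hayashi–Nagaoka operator inequality) Let S and T be positive semidefinite operators on a finite-dimensional Hilbert space with 0 ≤ S ≤ I. Then I - (S + T)^{-1/2} S (S + T)^{-1/2} ≤ 2(I - S) + 4T, where the inverse square root is taken on the support of S + T (generalized inverse). -/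
/-!
Put `K = (S + T)^{1/2}`, let `M` be its inverse on the support and `P = K M` the support
projection. Using `K M = M K = P`, `P K = K` and `S P = P S = S` (the support of `S + T` contains
that of `S`), one checks the identity
  `2(1 - S) + 4T - (1 - M S M)`
    `= (1 - P) + M ((P - 2K) T (P - 2K) + 2 (P - K) S (P - K) + 4 K (K - S) K) M`,
whose right-hand side is a sum of conjugates of positive operators. The only analytic input is
`S ≤ K`: since `0 ≤ S ≤ 1`, `S² ≤ S ≤ S + T`, and the square root is operator monotone.
-/

open scoped ComplexOrder

/-- The inverse square root of a Hermitian matrix taken on its support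
(square root of the Moore–Penrose pseudoinverse). -/
noncomputable def invSqrtOnSupport {n : Type*} [Fintype n] [DecidableEq n]
    (B : Matrix n n ℂ) (hB : B.IsHermitian) : Matrix n n ℂ :=
  (Matrix.IsHermitian.eigenvectorUnitary hB : Matrix n n ℂ) *
    Matrix.diagonal (fun i =>
      if 0 < hB.eigenvalues i then ((Real.sqrt (hB.eigenvalues i))⁻¹ : ℂ) else 0) *
    star (Matrix.IsHermitian.eigenvectorUnitary hB : Matrix n n ℂ)

open CFC

theorem hayashi_nagaoka_identity {R : Type*} [Ring R] {S T K M P : R}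
    (hKM : K * M = P) (hMK : M * K = P) (hPK : P * K = K) (hKP : K * P = K)
    (hSP : S * P = S) (hPS : P * S = S) (hT : T = K * K - S) :
    2 * (1 - S) + 4 * T - (1 - M * S * M) =
      (1 - P) + M * ((P - 2 • K) * T * (P - 2 • K) + 2 • ((P - K) * S * (P - K)) +
        4 • (K * (K - S) * K)) * M := by
  have reassoc {x y z : R} (h : x * y = z) (w : R) : x * (y * w) = z * w := by
    rw [← mul_assoc, h]
  subst hT
  simp only [← Nat.ofNat_nsmul_eq_mul, mul_add, add_mul, mul_sub, sub_mul, smul_mul_assoc,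
    mul_smul_comm, mul_assoc, hKM, hPK, hKP, hSP, hPS, reassoc hMK, reassoc hPK, reassoc hPS]
  module

theorem hayashi_nagaoka_of_relations {R : Type*} [Ring R] [PartialOrder R] [StarRing R]
    [StarOrderedRing R] {S T K M P : R} (hS : 0 ≤ S) (hT : 0 ≤ T) (hSK : S ≤ K)
    (hK : IsSelfAdjoint K) (hM : IsSelfAdjoint M) (hP : IsStarProjection P)
    (hKM : K * M = P) (hPK : P * K = K) (hSP : S * P = S) (hKK : K * K = S + T) :
    1 - M * S * M ≤ 2 * (1 - S) + 4 * T := by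
  have hMK : M * K = P := by
    simpa [hK.star_eq, hM.star_eq, hP.isSelfAdjoint.star_eq] using congr_arg star hKM
  have hKP : K * P = K := by
    simpa [hK.star_eq, hP.isSelfAdjoint.star_eq] using congr_arg star hPK
  have hPS : P * S = S := by
    simpa [hS.isSelfAdjoint.star_eq, hP.isSelfAdjoint.star_eq] using congr_arg star hSP
  rw [← sub_nonneg, hayashi_nagaoka_identity hKM hMK hPK hKP hSP hPS (eq_sub_of_add_eq' hKK.symm)]
  have hPT := (hP.isSelfAdjoint.sub ((IsSelfAdjoint.all 2).smul hK)).conjugate_nonneg hT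
  have hPKS := (hP.isSelfAdjoint.sub hK).conjugate_nonneg hS
  have hKS := hK.conjugate_nonneg (sub_nonneg.mpr hSK)
  exact add_nonneg hP.one_sub.nonneg
    (hM.conjugate_nonneg (add_nonneg (add_nonneg hPT (nsmul_nonneg hPKS 2)) (nsmul_nonneg hKS 4)))

section CStarAlgebra

variable {A : Type*} [CStarAlgebra A] [PartialOrder A] [StarOrderedRing A]

theorem mul_eq_zero_of_le_of_mul_eq_zero {a b x : A} (hb : 0 ≤ b) (hba : b ≤ a)
    (hax : a * x = 0) : b * x = 0 := by
  have hxbx : star x * b * x = 0 := by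
    refine le_antisymm ?_ (star_left_conjugate_nonneg hb x)
    simpa [mul_assoc, hax] using star_left_conjugate_le_conjugate hba x
  have hsqrt : sqrt b * x = 0 := by
    rw [← CStarRing.star_mul_self_eq_zero_iff, star_mul, (sqrt_nonneg b).isSelfAdjoint.star_eq,
      mul_assoc, ← mul_assoc (sqrt b), sqrt_mul_sqrt_self b, ← mul_assoc, hxbx]
  rw [← sqrt_mul_sqrt_self b, mul_assoc, hsqrt, mul_zero]

theorem mul_self_le_self {a : A} (h0 : 0 ≤ a) (h1 : a ≤ 1) : a * a ≤ a := by
  have hr := sqrt_mul_sqrt_self a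
  set r := sqrt a
  have : r * (1 - a) * r = a - a * a := by rw [← hr]; noncomm_ring
  rw [← sub_nonneg, ← this]
  exact (sqrt_nonneg a).isSelfAdjoint.conjugate_nonneg (sub_nonneg.mpr h1)

theorem le_sqrt_add_of_le_one {S T : A} (hS : 0 ≤ S) (hS1 : S ≤ 1) (hT : 0 ≤ T) :
    S ≤ sqrt (S + T) :=
  calc S = sqrt (S * S) := (sqrt_mul_self S).symm
    _ ≤ sqrt (S + T) :=
      sqrt_le_sqrt _ _ ((mul_self_le_self hS hS1).trans (le_add_of_nonneg_right hT))

/-- `x ↦ (√x)⁻¹` is the inverse square root on the support: `√x = 0` for `x ≤ 0` and `0⁻¹ = 0`.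
Its continuity on the spectrum, automatic in finite dimension, says that `0` is isolated there. -/
theorem hayashi_nagaoka_cfc {S T : A} (hS : 0 ≤ S) (hS1 : S ≤ 1) (hT : 0 ≤ T)
    (hc : ContinuousOn (fun x : ℝ => (√x)⁻¹) (spectrum ℝ (S + T))) :
    1 - cfc (fun x : ℝ => (√x)⁻¹) (S + T) * S * cfc (fun x : ℝ => (√x)⁻¹) (S + T) ≤
      2 * (1 - S) + 4 * T := by
  have hsqrt : sqrt (S + T) = cfc Real.sqrt (S + T) := by
    rw [sqrt_eq_real_sqrt _ (add_nonneg hS hT), cfcₙ_eq_cfc]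
  have hKMK : cfc Real.sqrt (S + T) * cfc (fun x : ℝ => (√x)⁻¹) (S + T) * cfc Real.sqrt (S + T)
      = cfc Real.sqrt (S + T) := by
    rw [← cfc_mul .., ← cfc_mul ..]
    simp only [mul_inv_mul_cancel]
  have hKK := sqrt_mul_sqrt_self (S + T) (add_nonneg hS hT)
  have hSK := le_sqrt_add_of_le_one hS hS1 hT
  have hcomm := cfc_commute_cfc Real.sqrt (fun x : ℝ => (√x)⁻¹) (S + T)
  rw [hsqrt] at hKK hSK
  set K := cfc Real.sqrt (S + T)
  set M := cfc (fun x : ℝ => (√x)⁻¹) (S + T)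
  have hK : IsSelfAdjoint K := cfc_predicate _ _
  have hM : IsSelfAdjoint M := cfc_predicate _ _
  have hP : IsStarProjection (K * M) :=
    ⟨by rw [IsIdempotentElem, ← mul_assoc, hKMK], (hK.commute_iff hM).mp hcomm⟩
  have hSP : S * (K * M) = S := by
    have hann : (S + T) * (1 - K * M) = 0 := by
      rw [← hKK, mul_sub, mul_one, mul_assoc, hcomm.eq, ← mul_assoc K M K, hKMK, sub_self]
    have := mul_eq_zero_of_le_of_mul_eq_zero hS (le_add_of_nonneg_right hT) hann
    rwa [mul_sub, mul_one, sub_eq_zero, eq_comm] at this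
  exact hayashi_nagaoka_of_relations hS hT hSK hK hM hP rfl hKMK hSP hKK

end CStarAlgebra

theorem invSqrtOnSupport_eq_cfc {n : Type*} [Fintype n] [DecidableEq n]
    (B : Matrix n n ℂ) (hB : B.IsHermitian) :
    invSqrtOnSupport B hB = cfc (fun x : ℝ => (√x)⁻¹) B := by
  rw [hB.cfc_eq, Matrix.IsHermitian.cfc, Unitary.conjStarAlgAut_apply, invSqrtOnSupport]
  congr 3 with i
  split_ifs with h
  · simp
  · simp [Real.sqrt_eq_zero'.mpr (not_lt.mp h)]

open scoped MatrixOrder Matrix.Norms.L2Operator in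
/-- Hayashi–Nagaoka operator inequality: for `0 ≤ S ≤ I` and `T ⪰ 0`,
`I - (S+T)^{-1/2} S (S+T)^{-1/2} ≤ 2(I - S) + 4T`, with the inverse square root
taken on the support of `S + T`. -/
theorem hayashi_nagaoka {d : ℕ} (S T : Matrix (Fin d) (Fin d) ℂ)
    (hS : S.PosSemidef) (hS1 : ((1 : Matrix (Fin d) (Fin d) ℂ) - S).PosSemidef)
    (hT : T.PosSemidef) (hST : (S + T).IsHermitian) :
    ((2 : ℂ) • ((1 : Matrix (Fin d) (Fin d) ℂ) - S) + (4 : ℂ) • T -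
      ((1 : Matrix (Fin d) (Fin d) ℂ) -
        invSqrtOnSupport _ hST * S * invSqrtOnSupport _ hST)).PosSemidef := by
  rw [← Matrix.nonneg_iff_posSemidef] at hS hT
  rw [← Matrix.le_iff] at hS1
  rw [← Matrix.le_iff, invSqrtOnSupport_eq_cfc]
  simp only [ofNat_smul_eq_nsmul, Nat.ofNat_nsmul_eq_mul]
  exact hayashi_nagaoka_cfc hS hS1 hT ((S + T).finite_real_spectrum.continuousOn _)
end
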